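/- arXiv:2206.13267 — 2 statements merged into one kernel-verified Lean document; each statement's English description precedes it below -/
import Mathlib

section
/- Let E_ℓ be the set of finite measures on I × ℝ^ℓ of the form μ = Σ_{i∈V} δ_{(i,x^i)} where V ⊆ I is finite, x^i ∈ ℝ^ℓ, and no two distinct labels in V are comparable for the strict prefix order (i ⊀ j for all i,j ∈ V). Then E_ℓ is a closed subset of the space M_F(I × ℝ^ℓ) of finite measures on I × ℝ^ℓ equipped with the topology of weak convergence. -/
open MeasureTheory

noncomputable section

/- The label set `I` carries the discrete topology: the metric `d^I` satisfies
`d^I(i,j) ≥ 1` whenever `i ≠ j`. -/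
instance : TopologicalSpace (List ℕ) := ⊥
instance : DiscreteTopology (List ℕ) := ⟨rfl⟩
instance : MeasurableSpace (List ℕ) := ⊤
instance : OpensMeasurableSpace (List ℕ) := ⟨le_top⟩

/-- The Dirac mass at a point, as a finite measure. -/
def diracFM {Ω : Type*} [MeasurableSpace Ω] (a : Ω) : FiniteMeasure Ω :=
  ⟨Measure.dirac a, inferInstance⟩

/-!
A measure `μ` on `I × ℝ^ℓ` is cut into its slices `μᵢ`, the parts over each label `i`, viewed as
measures on `ℝ^ℓ`; since the labels are discrete, `μ ↦ μᵢ` is weakly continuous. Then `μ ∈ E_ℓ`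
iff every slice is `0` or a Dirac mass and no two comparable labels both carry mass. Both
conditions are closed: a finite measure `ν` is `0` or a Dirac mass iff its mass is `0` or `1`
and `ν(1) ν(φ²) = ν(φ)²` for every bounded continuous `φ`, because a probability measure under
which every bounded continuous function has zero variance is the Dirac mass at any point of its
support.
-/

open ProbabilityTheory Set BoundedContinuousFunction

namespace MeasureTheory

theorem Measure.eqOn_support_of_ae_eq {X Y : Type*} [TopologicalSpace X] [MeasurableSpace X]
    [TopologicalSpace Y] [T2Space Y] {μ : Measure X} {f g : X → Y} (hf : Continuous f)
    (hg : Continuous g) (hfg : f =ᵐ[μ] g) : EqOn f g μ.support := by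
  intro x hx
  by_contra hne
  have hpos := (μ.mem_support_iff_forall x).1 hx _ ((isClosed_eq hf hg).isOpen_compl.mem_nhds hne)
  exact hpos.ne' (ae_iff.1 hfg)

theorem exists_eq_dirac_of_forall_variance_eq_zero {X : Type*} [TopologicalSpace X]
    [TopologicalSpace.PseudoMetrizableSpace X] [HereditarilyLindelofSpace X] [MeasurableSpace X]
    [BorelSpace X] (ν : Measure X) [IsProbabilityMeasure ν]
    (h : ∀ φ : X →ᵇ ℝ, Var[φ; ν] = 0) : ∃ x, ν = Measure.dirac x := by
  obtain ⟨x, hx⟩ := ν.nonempty_support (IsProbabilityMeasure.ne_zero ν)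
  refine ⟨x, ext_of_forall_integral_eq_of_IsFiniteMeasure fun φ => ?_⟩
  have hconst : ⇑φ =ᵐ[ν] fun _ => ∫ y, φ y ∂ν :=
    ae_eq_integral_of_variance_eq_zero (φ.memLp_top.mono_exponent le_top) (h φ)
  rw [integral_dirac' _ _ φ.continuous.stronglyMeasurable,
    Measure.eqOn_support_of_ae_eq φ.continuous continuous_const hconst hx]

namespace FiniteMeasure

theorem mass_diracFM {Ω : Type*} [MeasurableSpace Ω] (a : Ω) : (diracFM a).mass = 1 := by
  simp [mass, diracFM]

theorem integral_diracFM {Ω : Type*} [TopologicalSpace Ω] [MeasurableSpace Ω]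
    [OpensMeasurableSpace Ω] (φ : Ω →ᵇ ℝ) (a : Ω) : ∫ y, φ y ∂(diracFM a : Measure Ω) = φ a :=
  integral_dirac' _ _ φ.continuous.stronglyMeasurable

theorem continuous_restrict_of_isClopen {Ω : Type*} [TopologicalSpace Ω] [MeasurableSpace Ω]
    [OpensMeasurableSpace Ω] {s : Set Ω} (hs : IsClopen s) :
    Continuous fun μ : FiniteMeasure Ω => μ.restrict s := by
  refine continuous_iff_forall_continuous_integral.2 fun f => ?_
  have hindicator : ∀ μ : FiniteMeasure Ω,
      ∫ x, f x ∂(μ.restrict s : Measure Ω) =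
        ∫ x, (BoundedContinuousFunction.indicator s hs * f) x ∂μ := fun μ => by
    rw [restrict_measure_eq, ← integral_indicator hs.isOpen.measurableSet]
    congr 1 with x
    by_cases hx : x ∈ s <;> simp [hx]
  simp_rw [hindicator]
  exact continuous_integral_boundedContinuousFunction _

section Dirac

variable {X : Type*} [TopologicalSpace X] [TopologicalSpace.PseudoMetrizableSpace X]
  [HereditarilyLindelofSpace X] [MeasurableSpace X] [BorelSpace X]

/-- The variance condition is written without dividing by the mass, so that it is closed. -/
theorem eq_zero_or_dirac_iff (ν : FiniteMeasure X) :
    (ν = 0 ∨ ∃ x, ν = diracFM x) ↔ (ν.mass = 0 ∨ ν.mass = 1) ∧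
      ∀ φ : X →ᵇ ℝ, (ν.mass : ℝ) * ∫ y, (φ * φ) y ∂ν = (∫ y, φ y ∂ν) ^ 2 := by
  constructor
  · rintro (rfl | ⟨x, rfl⟩)
    · simp
    · refine ⟨Or.inr (mass_diracFM x), fun φ => ?_⟩
      rw [integral_diracFM, integral_diracFM, mass_diracFM]
      simp [sq]
  · rintro ⟨hmass | hmass, hvar⟩
    · exact Or.inl (mass_zero_iff ν |>.1 hmass)
    · have : IsProbabilityMeasure (ν : Measure X) := ⟨by simp [← ennreal_mass, hmass]⟩
      obtain ⟨x, hx⟩ := exists_eq_dirac_of_forall_variance_eq_zero (ν : Measure X) fun φ => by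
        rw [variance_eq_sub (φ.memLp_top.mono_exponent le_top), ← hvar φ]
        simp [hmass, sq]
      exact Or.inr ⟨x, Subtype.ext hx⟩

theorem isClosed_setOf_eq_zero_or_dirac :
    IsClosed {ν : FiniteMeasure X | ν = 0 ∨ ∃ x, ν = diracFM x} := by
  simp_rw [eq_zero_or_dirac_iff, ofPred_and, ofPred_forall]
  refine .inter ?_ (isClosed_iInter fun φ => isClosed_eq (by fun_prop) (by fun_prop))
  exact (isClosed_singleton.union isClosed_singleton).preimage continuous_mass

end Dirac

section Slice

variable {ι X : Type*} [MeasurableSpace ι] [MeasurableSpace X]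

def slice (μ : FiniteMeasure (ι × X)) (i : ι) : FiniteMeasure X :=
  (μ.restrict ({i} ×ˢ univ)).map Prod.snd

theorem toMeasure_slice_apply (μ : FiniteMeasure (ι × X)) (i : ι) {s : Set X}
    (hs : MeasurableSet s) : (μ.slice i : Measure X) s = (μ : Measure (ι × X)) ({i} ×ˢ s) := by
  rw [slice, toMeasure_map, Measure.map_apply measurable_snd hs, restrict_measure_eq,
    Measure.restrict_apply (measurable_snd hs)]
  congr 1 with ⟨j, y⟩
  simp [and_comm]

theorem continuous_slice [TopologicalSpace ι] [DiscreteTopology ι] [TopologicalSpace X]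
    [BorelSpace X] [OpensMeasurableSpace (ι × X)] (i : ι) :
    Continuous fun μ : FiniteMeasure (ι × X) => μ.slice i :=
  (continuous_map continuous_snd).comp
    (continuous_restrict_of_isClopen ((isClopen_discrete {i}).prod isClopen_univ))

variable [MeasurableSingletonClass ι]

theorem measure_eq_tsum_slice [Countable ι] (μ : FiniteMeasure (ι × X)) {s : Set (ι × X)}
    (hs : MeasurableSet s) :
    (μ : Measure (ι × X)) s = ∑' i, (μ.slice i : Measure X) (Prod.mk i ⁻¹' s) := by
  have hdecomp : s = ⋃ i, {i} ×ˢ (Prod.mk i ⁻¹' s) := by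
    ext ⟨i, y⟩
    simp
  conv_lhs => rw [hdecomp]
  rw [measure_iUnion]
  · simp_rw [toMeasure_slice_apply μ _ (measurable_prodMk_left hs)]
  · intro i j hij
    simp [Function.onFun, Set.disjoint_prod, hij]
  · exact fun i => (measurableSet_singleton i).prod (measurable_prodMk_left hs)

theorem ext_of_forall_slice_eq [Countable ι] {μ ν : FiniteMeasure (ι × X)}
    (h : ∀ i, μ.slice i = ν.slice i) : μ = ν :=
  toMeasure_injective <| Measure.ext fun s hs => by simp_rw [measure_eq_tsum_slice _ hs, h]

theorem finite_setOf_one_le_mass_slice [Countable ι] (μ : FiniteMeasure (ι × X)) :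
    {i | 1 ≤ (μ.slice i).mass}.Finite := by
  have hsum := measure_eq_tsum_slice μ MeasurableSet.univ
  simp_rw [preimage_univ, ← ennreal_mass] at hsum
  have := ENNReal.finite_const_le_of_tsum_ne_top (hsum ▸ ENNReal.coe_ne_top) one_ne_zero
  simpa [← ennreal_mass] using this

theorem slice_sum_diracFM [DecidableEq ι] (V : Finset ι) (x : ι → X) (i : ι) :
    (∑ j ∈ V, diracFM (j, x j)).slice i = if i ∈ V then diracFM (x i) else 0 := by
  apply toMeasure_injective
  ext s hs
  rw [toMeasure_slice_apply _ _ hs, toMeasure_sum, Measure.coe_finsetSum, Finset.sum_apply]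
  have hterm : ∀ j, (diracFM (j, x j) : Measure (ι × X)) ({i} ×ˢ s) =
      if j = i then (diracFM (x i) : Measure X) s else 0 := fun j => by
    change Measure.dirac (j, x j) _ = if j = i then Measure.dirac (x i) s else 0
    rw [Measure.dirac_apply' _ ((measurableSet_singleton i).prod hs), Measure.dirac_apply' _ hs]
    by_cases hj : j = i
    · subst hj
      by_cases hx : x j ∈ s <;> simp [hx]
    · simp [hj]
  simp_rw [hterm, Finset.sum_ite_eq']
  split_ifs <;> simp

theorem exists_eq_sum_diracFM_iff [Countable ι] [Nonempty X] (r : ι → ι → Prop)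
    (μ : FiniteMeasure (ι × X)) :
    (∃ (V : Finset ι) (x : ι → X), (∀ i ∈ V, ∀ j ∈ V, ¬ r i j) ∧
        μ = ∑ i ∈ V, diracFM (i, x i)) ↔
      (∀ i, μ.slice i = 0 ∨ ∃ y, μ.slice i = diracFM y) ∧
        ∀ i j, r i j → (μ.slice i).mass = 0 ∨ (μ.slice j).mass = 0 := by
  classical
  constructor
  · rintro ⟨V, x, hV, rfl⟩
    simp_rw [slice_sum_diracFM]
    refine ⟨fun i => ?_, fun i j hij => ?_⟩
    · split_ifs
      exacts [Or.inr ⟨x i, rfl⟩, Or.inl rfl]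
    · by_cases hi : i ∈ V
      · by_cases hj : j ∈ V
        · exact absurd hij (hV i hi j hj)
        · simp [hj]
      · simp [hi]
  · rintro ⟨hdirac, hr⟩
    have hpoint : ∀ i, ∃ y, μ.slice i ≠ 0 → μ.slice i = diracFM y := fun i => by
      rcases hdirac i with h | ⟨y, hy⟩
      exacts [⟨Classical.arbitrary X, fun h' => absurd h h'⟩, ⟨y, fun _ => hy⟩]
    choose x hx using hpoint
    have hfin : {i | μ.slice i ≠ 0}.Finite :=
      (finite_setOf_one_le_mass_slice μ).subset fun i hi => by
        simp [hx i hi, mass_diracFM]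
    refine ⟨hfin.toFinset, x, fun i hi j hj hij => ?_, ext_of_forall_slice_eq fun i => ?_⟩
    · rw [hfin.mem_toFinset] at hi hj
      rcases hr i j hij with h | h
      exacts [hi ((mass_zero_iff _).1 h), hj ((mass_zero_iff _).1 h)]
    · rw [slice_sum_diracFM]
      split_ifs with hi
      · exact hx i (hfin.mem_toFinset.1 hi)
      · simpa using mt hfin.mem_toFinset.2 hi

theorem isClosed_setOf_exists_eq_sum_diracFM [TopologicalSpace ι] [DiscreteTopology ι]
    [Countable ι] [TopologicalSpace X] [TopologicalSpace.PseudoMetrizableSpace X]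
    [HereditarilyLindelofSpace X] [BorelSpace X] [OpensMeasurableSpace (ι × X)] [Nonempty X]
    (r : ι → ι → Prop) :
    IsClosed {μ : FiniteMeasure (ι × X) | ∃ (V : Finset ι) (x : ι → X),
      (∀ i ∈ V, ∀ j ∈ V, ¬ r i j) ∧ μ = ∑ i ∈ V, diracFM (i, x i)} := by
  simp_rw [exists_eq_sum_diracFM_iff, ofPred_and, ofPred_forall]
  refine .inter (isClosed_iInter fun i =>
    isClosed_setOf_eq_zero_or_dirac.preimage (continuous_slice i)) ?_
  refine isClosed_iInter fun i => isClosed_iInter fun j => isClosed_iInter fun _ => ?_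
  exact .union (isClosed_eq (continuous_mass.comp (continuous_slice i)) continuous_const)
    (isClosed_eq (continuous_mass.comp (continuous_slice j)) continuous_const)

end Slice

end FiniteMeasure

end MeasureTheory

/-- The set `E_ℓ` of finite measures of the form `Σ_{i ∈ V} δ_{(i, xⁱ)}`, with `V ⊆ I`
finite and the labels of `V` pairwise incomparable for the strict prefix order,
is closed in the space of finite measures on `I × ℝ^ℓ` with the weak topology. -/
theorem E_closed (ℓ : ℕ) :
    IsClosed {μ : FiniteMeasure (List ℕ × EuclideanSpace ℝ (Fin ℓ)) |
      ∃ (V : Finset (List ℕ)) (x : List ℕ → EuclideanSpace ℝ (Fin ℓ)),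
        (∀ i ∈ V, ∀ j ∈ V, ¬ (i <+: j ∧ i ≠ j)) ∧
        μ = ∑ i ∈ V, diracFM (i, x i)} :=
  FiniteMeasure.isClosed_setOf_exists_eq_sum_diracFM fun i j => i <+: j ∧ i ≠ j
end
end

section
/- If a sequence μ_n = Σ_{i∈V_n} δ_{(i,x_n^i)} in E_ℓ converges weakly to a finite measure μ on I × ℝ^ℓ, then for every i ∈ I the sequence of indicators 1_{i∈V_n} is eventually constant, and if its limit is 1 then (x_n^i)_n converges in ℝ^ℓ. -/
open MeasureTheory Filter

noncomputable section

/-! Labels are isolated, so `(j, y) ↦ 1_{j = i} g(y)` is a bounded continuous test function for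
every bounded continuous `g`; testing against it gives `1_{i ∈ V_n} g(x_nⁱ) → ∫ g dμᵢ`, where `μᵢ`
is the fiber of `μ` over `i`. For `g = 1` this is a convergent `{0, 1}`-valued sequence, hence
eventually constant. Once `i ∈ V_n` eventually, `δ_{x_nⁱ} → μᵢ` weakly, so `μᵢ` has mass `1`: a
Urysohn function for a ball of positive `μᵢ`-mass traps `x_nⁱ` in a compact ball, and every cluster
point `b` satisfies `g b = ∫ g dμᵢ` for all `g`, so there is only one. -/

open Topology Set Metric BoundedContinuousFunction

theorem MapClusterPt.eq_of_tendsto {α X : Type*} [TopologicalSpace X] [T2Space X] {F : Filter α}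
    {u : α → X} {x y : X} (hx : MapClusterPt x F u) (hy : Tendsto u F (𝓝 y)) : x = y :=
  eq_of_nhds_neBot (hx.neBot.mono (inf_le_inf_left _ hy))

theorem eventually_or_eventually_not_of_tendsto_ite {α X : Type*} [TopologicalSpace X]
    [T1Space X] {l : Filter α} {p : α → Prop} [DecidablePred p] {a b c : X} (hab : a ≠ b)
    (h : Tendsto (fun n => if p n then a else b) l (𝓝 c)) :
    (∀ᶠ n in l, p n) ∨ ∀ᶠ n in l, ¬ p n := by
  by_cases hcb : c = b
  · refine .inr ((h.eventually_ne (hcb ▸ hab.symm)).mono fun n hn hpn => ?_)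
    simp [hpn] at hn
  · refine .inl ((h.eventually_ne hcb).mono fun n hn => ?_)
    by_contra hpn
    simp [hpn] at hn

section DiracSums

variable {Ω : Type*} [TopologicalSpace Ω] [MeasurableSpace Ω] [OpensMeasurableSpace Ω]

theorem integral_diracFM (f : Ω →ᵇ ℝ) (a : Ω) : ∫ ω, f ω ∂(diracFM a : Measure Ω) = f a :=
  integral_dirac' _ _ f.continuous.stronglyMeasurable

theorem integral_sum_diracFM {ι : Type*} (f : Ω →ᵇ ℝ) (s : Finset ι) (p : ι → Ω) :
    ∫ ω, f ω ∂((∑ j ∈ s, diracFM (p j) : FiniteMeasure Ω) : Measure Ω) = ∑ j ∈ s, f (p j) := by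
  rw [FiniteMeasure.toMeasure_sum, integral_finsetSum_measure fun j _ => f.integrable _]
  exact Finset.sum_congr rfl fun j _ => integral_diracFM f (p j)

theorem tendsto_apply_of_tendsto_diracFM {α : Type*} {l : Filter α} {a : α → Ω}
    {ν : FiniteMeasure Ω} (h : Tendsto (fun n => diracFM (a n)) l (𝓝 ν)) (f : Ω →ᵇ ℝ) :
    Tendsto (fun n => f (a n)) l (𝓝 (∫ ω, f ω ∂(ν : Measure Ω))) := by
  simpa only [integral_diracFM] using FiniteMeasure.tendsto_iff_forall_integral_tendsto.mp h f

theorem tendsto_sum_apply_of_tendsto_sum_diracFM {α ι : Type*} {l : Filter α}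
    {s : α → Finset ι} {p : α → ι → Ω} {μ : FiniteMeasure Ω}
    (h : Tendsto (fun n => ∑ j ∈ s n, diracFM (p n j)) l (𝓝 μ)) (f : Ω →ᵇ ℝ) :
    Tendsto (fun n => ∑ j ∈ s n, f (p n j)) l (𝓝 (∫ ω, f ω ∂(μ : Measure Ω))) := by
  simpa only [integral_sum_diracFM] using FiniteMeasure.tendsto_iff_forall_integral_tendsto.mp h f

theorem apply_eq_integral_of_mapClusterPt {α : Type*} {l : Filter α} {a : α → Ω}
    {ν : FiniteMeasure Ω} (h : Tendsto (fun n => diracFM (a n)) l (𝓝 ν)) {b : Ω}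
    (hb : MapClusterPt b l a) (f : Ω →ᵇ ℝ) : f b = ∫ ω, f ω ∂(ν : Measure Ω) :=
  (hb.tendsto_comp (f.continuous.tendsto b)).eq_of_tendsto (tendsto_apply_of_tendsto_diracFM h f)

end DiracSums

section LabelFibers

variable {ι E : Type*} [TopologicalSpace ι] [DiscreteTopology ι] [TopologicalSpace E]

def labelTest (i : ι) (g : E →ᵇ ℝ) : ι × E →ᵇ ℝ :=
  BoundedContinuousFunction.indicator _ ((isClopen_discrete {i}).preimage continuous_fst) *
    g.compContinuous ⟨Prod.snd, continuous_snd⟩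

theorem labelTest_eq_indicator (i : ι) (g : E →ᵇ ℝ) :
    ⇑(labelTest i g) = (Prod.fst ⁻¹' {i}).indicator (g ∘ Prod.snd) := by
  ext p
  by_cases hp : p.1 = i <;> simp [labelTest, Set.indicator, hp]

theorem sum_labelTest [DecidableEq ι] (i : ι) (g : E →ᵇ ℝ) (s : Finset ι) (y : ι → E) :
    ∑ j ∈ s, labelTest i g (j, y j) = if i ∈ s then g (y i) else 0 := by
  simp [labelTest_eq_indicator, Set.indicator, Finset.sum_ite_eq']

variable [MeasurableSpace ι] [MeasurableSpace E]

def labelFiber (μ : FiniteMeasure (ι × E)) (i : ι) : FiniteMeasure E :=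
  (μ.restrict (Prod.fst ⁻¹' {i})).map Prod.snd

theorem integral_labelTest [OpensMeasurableSpace E] [OpensMeasurableSpace (ι × E)]
    (μ : FiniteMeasure (ι × E)) (i : ι) (g : E →ᵇ ℝ) :
    ∫ p, labelTest i g p ∂(μ : Measure (ι × E)) = ∫ y, g y ∂(labelFiber μ i : Measure E) := by
  have hfiber : MeasurableSet (Prod.fst ⁻¹' {i} : Set (ι × E)) :=
    ((isOpen_discrete {i}).preimage continuous_fst).measurableSet
  rw [labelTest_eq_indicator, integral_indicator hfiber, labelFiber, FiniteMeasure.toMeasure_map,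
    FiniteMeasure.restrict_measure_eq,
    integral_map measurable_snd.aemeasurable g.continuous.aestronglyMeasurable]
  rfl

theorem tendsto_ite_apply_of_tendsto_sum_diracFM [DecidableEq ι] [OpensMeasurableSpace E]
    [OpensMeasurableSpace (ι × E)] {α : Type*} {l : Filter α} {s : α → Finset ι}
    {y : α → ι → E} {μ : FiniteMeasure (ι × E)}
    (h : Tendsto (fun n => ∑ j ∈ s n, diracFM (j, y n j)) l (𝓝 μ)) (i : ι) (g : E →ᵇ ℝ) :
    Tendsto (fun n => if i ∈ s n then g (y n i) else 0) l
      (𝓝 (∫ z, g z ∂(labelFiber μ i : Measure E))) := by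
  simpa only [sum_labelTest, integral_labelTest] using
    tendsto_sum_apply_of_tendsto_sum_diracFM h (labelTest i g)

end LabelFibers

section ProperSpace

variable {E : Type*} [MetricSpace E] [ProperSpace E] [MeasurableSpace E] [OpensMeasurableSpace E]
  {α : Type*} {l : Filter α} [l.NeBot] {a : α → E} {ν : FiniteMeasure E}

theorem exists_isCompact_eventually_mem_of_tendsto_diracFM
    (h : Tendsto (fun n => diracFM (a n)) l (𝓝 ν)) : ∃ K, IsCompact K ∧ ∀ᶠ n in l, a n ∈ K := by
  obtain ⟨n₀, -⟩ := l.nonempty_of_mem univ_mem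
  have hmass : (ν : Measure E) ≠ 0 := by
    intro hν
    have := tendsto_nhds_unique tendsto_const_nhds (tendsto_apply_of_tendsto_diracFM h 1)
    simp only [BoundedContinuousFunction.coe_one, Pi.one_apply, hν, integral_zero_measure] at this
    exact one_ne_zero this
  obtain ⟨m, hm⟩ : ∃ m : ℕ, 0 < (ν : Measure E) (closedBall (a n₀) m) :=
    exists_measure_pos_of_not_measure_iUnion_null
      (by rwa [iUnion_closedBall_nat, Ne, Measure.measure_univ_eq_zero])
  obtain ⟨f, hf0, hf1, hf01⟩ := exists_bounded_zero_one_of_closed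
    (isOpen_ball (x := a n₀) (ε := m + 1)).isClosed_compl isClosed_closedBall
    (disjoint_compl_left_iff_subset.2 (closedBall_subset_ball (lt_add_one _)))
  have hf : 0 < ∫ y, f y ∂(ν : Measure E) := by
    refine (integral_pos_iff_support_of_nonneg (fun y => (hf01 y).1) (f.integrable _)).2 ?_
    exact hm.trans_le (measure_mono fun y hy => by simp [hf1 hy])
  refine ⟨closedBall (a n₀) (m + 1), isCompact_closedBall _ _, ?_⟩
  filter_upwards [(tendsto_apply_of_tendsto_diracFM h f).eventually (eventually_gt_nhds hf)]
    with n hn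
  by_contra hout
  exact hn.ne' (hf0 fun hball => hout (ball_subset_closedBall hball))

theorem exists_tendsto_of_tendsto_diracFM (h : Tendsto (fun n => diracFM (a n)) l (𝓝 ν)) :
    ∃ b, Tendsto a l (𝓝 b) := by
  obtain ⟨K, hK, haK⟩ := exists_isCompact_eventually_mem_of_tendsto_diracFM h
  obtain ⟨b, -, hb⟩ := hK.exists_mapClusterPt_of_frequently haK.frequently
  refine ⟨b, hK.tendsto_nhds_of_unique_mapClusterPt haK fun c _ hc => ?_⟩
  by_contra hcb
  obtain ⟨f, hfc, hfb, -⟩ := exists_bounded_zero_one_of_closed isClosed_singleton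
    isClosed_singleton (disjoint_singleton.2 hcb)
  have := (apply_eq_integral_of_mapClusterPt h hc f).trans
    (apply_eq_integral_of_mapClusterPt h hb f).symm
  simp [hfc rfl, hfb rfl] at this

end ProperSpace

theorem weak_limit_labels_eventually_constant_general (ℓ : ℕ)
    (V : ℕ → Finset (List ℕ)) (x : ℕ → List ℕ → EuclideanSpace ℝ (Fin ℓ))
    (μ : FiniteMeasure (List ℕ × EuclideanSpace ℝ (Fin ℓ)))
    (hconv : Tendsto (fun n => ∑ i ∈ V n, diracFM (i, x n i)) atTop (nhds μ)) :
    ∀ i : List ℕ,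
      ((∀ᶠ n in atTop, i ∈ V n) ∨ (∀ᶠ n in atTop, i ∉ V n)) ∧
      ((∀ᶠ n in atTop, i ∈ V n) →
        ∃ y : EuclideanSpace ℝ (Fin ℓ), Tendsto (fun n => x n i) atTop (nhds y)) := by
  intro i
  have hlim := tendsto_ite_apply_of_tendsto_sum_diracFM hconv i
  refine ⟨eventually_or_eventually_not_of_tendsto_ite one_ne_zero (hlim 1), fun hmem => ?_⟩
  refine exists_tendsto_of_tendsto_diracFM (ν := labelFiber μ i) ?_
  refine FiniteMeasure.tendsto_iff_forall_integral_tendsto.2 fun g => (hlim g).congr' ?_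
  filter_upwards [hmem] with n hn
  rw [if_pos hn, integral_diracFM]

/-- If a sequence `μ_n = Σ_{i ∈ V_n} δ_{(i, x_nⁱ)}` of elements of `E_ℓ` converges
weakly to a finite measure `μ` on `I × ℝ^ℓ`, then for every label `i` the indicator
`1_{i ∈ V_n}` is eventually constant, and if `i` eventually belongs to `V_n`
then the sequence `(x_nⁱ)_n` converges in `ℝ^ℓ`. -/
theorem weak_limit_labels_eventually_constant (ℓ : ℕ)
    (V : ℕ → Finset (List ℕ)) (x : ℕ → List ℕ → EuclideanSpace ℝ (Fin ℓ))
    (hinc : ∀ n, ∀ i ∈ V n, ∀ j ∈ V n, ¬ (i <+: j ∧ i ≠ j))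
    (μ : FiniteMeasure (List ℕ × EuclideanSpace ℝ (Fin ℓ)))
    (hconv : Tendsto (fun n => ∑ i ∈ V n, diracFM (i, x n i)) atTop (nhds μ)) :
    ∀ i : List ℕ,
      ((∀ᶠ n in atTop, i ∈ V n) ∨ (∀ᶠ n in atTop, i ∉ V n)) ∧
      ((∀ᶠ n in atTop, i ∈ V n) →
        ∃ y : EuclideanSpace ℝ (Fin ℓ), Tendsto (fun n => x n i) atTop (nhds y)) :=
  weak_limit_labels_eventually_constant_general ℓ V x μ hconv
end
end
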